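/- Let A be a real M×N matrix such that AA* is invertible, and let γ_m(A) denote its preconditioned restricted isometry constant of order m. Let u, v ∈ ℝ^N be vectors with supp(u) = T′, supp(v) = T″, |T′| ≤ s, |T″| ≤ t, and T′ ∩ T″ = ∅. Then |⟨Au, (AA*)⁻¹Av⟩| ≤ γ_{s+t}(A) · ‖u‖₂ · ‖v‖₂. -/

import Mathlib

/-!
Write `S = (AAᴴ)^{1/2}` and `B = S⁻¹A`. Then `⟪Au, (AAᴴ)⁻¹Av⟫ = ⟪Bu, Bv⟫`, and `BBᵀ = 1`, so
`‖Bx‖ ≤ ‖x‖` for every `x`: the preconditioned matrix satisfies the upper restricted isometry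
bound with constant `0`. After rescaling `u` and `v` to a common length `r`, the vectors `u ± v`
are `(s+t)`-sparse with `‖u ± v‖² = 2r²` because the supports are disjoint, so both
`‖B(u ± v)‖²` lie in `[2(1-γ)r², 2r²]` and the polarization identity
`4⟪Bu, Bv⟫ = ‖B(u+v)‖² - ‖B(u-v)‖²` gives `|⟪Bu, Bv⟫| ≤ γr²/2`.
-/

open Matrix

noncomputable def norm2 {n : ℕ} (x : Fin n → ℝ) : ℝ := Real.sqrt (∑ i, x i ^ 2)

def sparse {n : ℕ} (s : ℕ) (x : Fin n → ℝ) : Prop :=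
  (Finset.univ.filter fun i => x i ≠ 0).card ≤ s

def restrict {n : ℕ} (T : Finset (Fin n)) (x : Fin n → ℝ) : Fin n → ℝ :=
  fun i => if i ∈ T then x i else 0

/-- The preconditioned matrix `(AAᴴ)^{-1/2} A`, where `(AAᴴ)^{-1/2}` is the inverse of the
positive semidefinite square root of `AAᴴ`. -/
noncomputable def precond {M N : ℕ} (A : Matrix (Fin M) (Fin N) ℝ) :
    Matrix (Fin M) (Fin N) ℝ :=
  ((Matrix.posSemidef_self_mul_conjTranspose A).1.eigenvectorUnitary.1 *
      diagonal ((↑) ∘ (√·) ∘ (Matrix.posSemidef_self_mul_conjTranspose A).1.eigenvalues) *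
      (star (Matrix.posSemidef_self_mul_conjTranspose A).1.eigenvectorUnitary :
        Matrix (Fin M) (Fin M) ℝ))⁻¹ * A

/-- The preconditioned restricted isometry constant `γ_s(A)`: the smallest `γ ≥ 0` such that
`(1-γ)‖x‖₂² ≤ ‖(AAᴴ)^{-1/2}Ax‖₂²` for all `s`-sparse `x`. -/
noncomputable def pripConst {M N : ℕ} (A : Matrix (Fin M) (Fin N) ℝ) (s : ℕ) : ℝ :=
  sInf {γ : ℝ | 0 ≤ γ ∧ ∀ x : Fin N → ℝ, sparse s x →
    (1 - γ) * norm2 x ^ 2 ≤ norm2 ((precond A).mulVec x) ^ 2}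

/-- The restricted isometry constant `δ_s(B)`: the smallest `δ ≥ 0` such that
`(1-δ)‖x‖₂² ≤ ‖Bx‖₂² ≤ (1+δ)‖x‖₂²` for all `s`-sparse `x`. -/
noncomputable def ripConst {m n : ℕ} (B : Matrix (Fin m) (Fin n) ℝ) (s : ℕ) : ℝ :=
  sInf {δ : ℝ | 0 ≤ δ ∧ ∀ x : Fin n → ℝ, sparse s x →
    (1 - δ) * norm2 x ^ 2 ≤ norm2 (B.mulVec x) ^ 2 ∧
      norm2 (B.mulVec x) ^ 2 ≤ (1 + δ) * norm2 x ^ 2}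

/-- `θ_t(A) = δ_t((AAᴴ)⁻¹A)`. -/
noncomputable def thetaConst {M N : ℕ} (A : Matrix (Fin M) (Fin N) ℝ) (t : ℕ) : ℝ :=
  ripConst ((A * Aᴴ)⁻¹ * A) t

section DotProduct

variable {m n p : Type*} [Fintype m] [Fintype n]

theorem mulVec_dotProduct_mulVec {R : Type*} [CommSemiring R] [Fintype p]
    (B : Matrix m n R) (C : Matrix m p R) (x : n → R) (y : p → R) :
    B *ᵥ x ⬝ᵥ C *ᵥ y = x ⬝ᵥ (Bᵀ * C) *ᵥ y := by
  rw [← mulVec_mulVec, dotProduct_mulVec x, vecMul_transpose]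

variable [DecidableEq m]

theorem mulVec_dotProduct_self_le_of_mul_transpose_eq_one {B : Matrix m n ℝ}
    (hB : B * Bᵀ = 1) (x : n → ℝ) : B *ᵥ x ⬝ᵥ B *ᵥ x ≤ x ⬝ᵥ x := by
  have hxw : x ⬝ᵥ Bᵀ *ᵥ (B *ᵥ x) = B *ᵥ x ⬝ᵥ B *ᵥ x := by
    rw [mulVec_dotProduct_mulVec, mulVec_mulVec]
  have hww : Bᵀ *ᵥ (B *ᵥ x) ⬝ᵥ Bᵀ *ᵥ (B *ᵥ x) = B *ᵥ x ⬝ᵥ B *ᵥ x := by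
    rw [mulVec_dotProduct_mulVec, transpose_transpose, hB, one_mulVec]
  -- `0 ≤ ‖x - BᵀBx‖² = ‖x‖² - ‖Bx‖²`
  have := dotProduct_self_star_nonneg (x - Bᵀ *ᵥ (B *ᵥ x))
  simp only [star_trivial, sub_dotProduct, dotProduct_sub, dotProduct_comm _ x] at this
  linarith

theorem abs_mulVec_dotProduct_mulVec_le {B : Matrix m n ℝ} (hB : B * Bᵀ = 1) {γ : ℝ}
    {x y : n → ℝ} (hxy : x ⬝ᵥ y = 0) (hxx : x ⬝ᵥ x = y ⬝ᵥ y)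
    (hadd : (1 - γ) * ((x + y) ⬝ᵥ (x + y)) ≤ B *ᵥ (x + y) ⬝ᵥ B *ᵥ (x + y))
    (hsub : (1 - γ) * ((x - y) ⬝ᵥ (x - y)) ≤ B *ᵥ (x - y) ⬝ᵥ B *ᵥ (x - y)) :
    |B *ᵥ x ⬝ᵥ B *ᵥ y| ≤ γ / 2 * (x ⬝ᵥ x) := by
  have hadd' := mulVec_dotProduct_self_le_of_mul_transpose_eq_one hB (x + y)
  have hsub' := mulVec_dotProduct_self_le_of_mul_transpose_eq_one hB (x - y)
  simp only [mulVec_add, mulVec_sub, add_dotProduct, dotProduct_add, sub_dotProduct,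
    dotProduct_sub, dotProduct_comm y x, dotProduct_comm (B *ᵥ y) (B *ᵥ x), hxy, ← hxx]
    at hadd hsub hadd' hsub'
  rw [abs_le]
  constructor <;> linarith

end DotProduct

theorem norm2_sq {n : ℕ} (x : Fin n → ℝ) : norm2 x ^ 2 = x ⬝ᵥ x := by
  rw [norm2, Real.sq_sqrt (by positivity)]
  simp only [dotProduct, sq]

theorem norm2_nonneg {n : ℕ} (x : Fin n → ℝ) : 0 ≤ norm2 x := Real.sqrt_nonneg _

theorem norm2_pos {n : ℕ} {x : Fin n → ℝ} : 0 < norm2 x ↔ x ≠ 0 := by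
  rw [(norm2_nonneg x).lt_iff_ne', ne_eq, ← sq_eq_zero_iff, norm2_sq,
    dotProduct_self_eq_zero]

section Sparse

variable {n s t : ℕ} {x y : Fin n → ℝ}

theorem sparse_of_ne_zero_iff_mem {T : Finset (Fin n)} (hx : ∀ i, x i ≠ 0 ↔ i ∈ T)
    (hT : T.card ≤ s) : sparse s x := by
  rwa [sparse, show Finset.univ.filter (fun i => x i ≠ 0) = T by ext i; simp [hx]]

theorem sparse.mono_support (hx : sparse s x) (hyx : ∀ i, y i ≠ 0 → x i ≠ 0) : sparse s y :=
  (Finset.card_le_card fun _ hi => by simp_all).trans hx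

theorem sparse.add (hx : sparse s x) (hy : sparse t y) : sparse (s + t) (x + y) := by
  refine le_trans (Finset.card_le_card fun _ hi => ?_)
    ((Finset.card_union_le _ _).trans (Nat.add_le_add hx hy))
  by_contra h
  simp_all

theorem sparse.smul (hx : sparse s x) (c : ℝ) : sparse s (c • x) :=
  hx.mono_support fun _ hi => right_ne_zero_of_mul hi

theorem sparse.sub (hx : sparse s x) (hy : sparse t y) : sparse (s + t) (x - y) :=
  sub_eq_add_neg x y ▸ hx.add (hy.mono_support fun _ => neg_ne_zero.mp)

end Sparse

theorem dotProduct_eq_zero_of_disjoint {n : ℕ} {x y : Fin n → ℝ} {T T' : Finset (Fin n)}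
    (hx : ∀ i, x i ≠ 0 → i ∈ T) (hy : ∀ i, y i ≠ 0 → i ∈ T') (hT : Disjoint T T') :
    x ⬝ᵥ y = 0 := by
  refine Finset.sum_eq_zero fun i _ => ?_
  by_contra h
  obtain ⟨hxi, hyi⟩ := mul_ne_zero_iff.mp h
  exact Finset.disjoint_left.mp hT (hx i hxi) (hy i hyi)

theorem abs_mulVec_dotProduct_mulVec_le_of_sparse {m N s t : ℕ} {B : Matrix (Fin m) (Fin N) ℝ}
    (hB : B * Bᵀ = 1) {γ : ℝ}
    (hγ : ∀ z, sparse (s + t) z → (1 - γ) * norm2 z ^ 2 ≤ norm2 (B *ᵥ z) ^ 2)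
    {u v : Fin N → ℝ} (hu : sparse s u) (hv : sparse t v) (huv : u ⬝ᵥ v = 0) :
    |B *ᵥ u ⬝ᵥ B *ᵥ v| ≤ γ / 2 * norm2 u * norm2 v := by
  obtain rfl | hu0 := eq_or_ne u 0
  · simp [norm2]
  obtain rfl | hv0 := eq_or_ne v 0
  · simp [norm2]
  have hab : 0 < norm2 u * norm2 v := mul_pos (norm2_pos.mpr hu0) (norm2_pos.mpr hv0)
  have hlow : ∀ z, sparse (s + t) z → (1 - γ) * (z ⬝ᵥ z) ≤ B *ᵥ z ⬝ᵥ B *ᵥ z := fun z hz => by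
    simpa only [norm2_sq] using hγ z hz
  -- rescale `u` and `v` to the common length `‖u‖ * ‖v‖`
  have key := abs_mulVec_dotProduct_mulVec_le (x := norm2 v • u) (y := norm2 u • v) hB
    (by simp [huv]) (by simp only [smul_dotProduct, dotProduct_smul, ← norm2_sq]; ring)
    (hlow _ ((hu.smul _).add (hv.smul _))) (hlow _ ((hu.smul _).sub (hv.smul _)))
  simp only [mulVec_smul, smul_dotProduct, dotProduct_smul, smul_eq_mul, ← norm2_sq,
    abs_mul, abs_of_nonneg (norm2_nonneg _)] at key
  exact le_of_mul_le_mul_left (by linear_combination key) hab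

section Precond

theorem cfc_sqrt_mul_self {n : Type*} [Fintype n] [DecidableEq n] {G : Matrix n n ℝ}
    (hG : G.PosSemidef) : cfc Real.sqrt G * cfc Real.sqrt G = G := by
  rw [← cfc_mul Real.sqrt Real.sqrt G]
  conv_rhs => rw [← cfc_id ℝ G hG.isHermitian.isSelfAdjoint]
  refine cfc_congr fun x hx => Real.mul_self_sqrt ?_
  rw [hG.isHermitian.spectrum_real_eq_range_eigenvalues] at hx
  obtain ⟨i, rfl⟩ := hx
  exact hG.eigenvalues_nonneg i

theorem transpose_cfc {n : Type*} [Fintype n] [DecidableEq n] (f : ℝ → ℝ) (G : Matrix n n ℝ) :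
    (cfc f G)ᵀ = cfc f G := by
  rw [← conjTranspose_eq_transpose_of_trivial]
  exact cfc_predicate f G

variable {M N : ℕ} (A : Matrix (Fin M) (Fin N) ℝ)

theorem precond_eq_cfc : precond A = (cfc Real.sqrt (A * Aᴴ))⁻¹ * A := by
  rw [precond, (isHermitian_mul_conjTranspose_self A).cfc_eq, IsHermitian.cfc,
    Unitary.conjStarAlgAut_apply]
  rfl

theorem transpose_precond_mul_precond : (precond A)ᵀ * precond A = Aᵀ * (A * Aᴴ)⁻¹ * A := by
  conv_rhs => rw [← cfc_sqrt_mul_self (posSemidef_self_mul_conjTranspose A), Matrix.mul_inv_rev]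
  rw [precond_eq_cfc, transpose_mul, transpose_nonsing_inv, transpose_cfc]
  simp only [Matrix.mul_assoc]

theorem precond_mul_transpose_precond (hA : IsUnit (A * Aᴴ).det) :
    precond A * (precond A)ᵀ = 1 := by
  rw [precond_eq_cfc, transpose_mul, transpose_nonsing_inv, transpose_cfc,
    ← conjTranspose_eq_transpose_of_trivial]
  have hSS := cfc_sqrt_mul_self (posSemidef_self_mul_conjTranspose A)
  generalize cfc Real.sqrt (A * Aᴴ) = S at hSS ⊢
  have hS : IsUnit S.det := isUnit_of_mul_isUnit_left (det_mul S S ▸ hSS ▸ hA)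
  rw [Matrix.mul_assoc, ← Matrix.mul_assoc A, ← hSS,
    ← Matrix.mul_assoc, ← Matrix.mul_assoc, nonsing_inv_mul _ hS, Matrix.one_mul,
    mul_nonsing_inv _ hS]

theorem mulVec_dotProduct_inv_mulVec_eq (u v : Fin N → ℝ) :
    A *ᵥ u ⬝ᵥ (A * Aᴴ)⁻¹ *ᵥ (A *ᵥ v) = precond A *ᵥ u ⬝ᵥ precond A *ᵥ v := by
  rw [mulVec_mulVec, mulVec_dotProduct_mulVec, mulVec_dotProduct_mulVec,
    transpose_precond_mul_precond, Matrix.mul_assoc]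

end Precond

section PripConst

variable {M N : ℕ} (A : Matrix (Fin M) (Fin N) ℝ) (s : ℕ)

theorem pripConst_nonneg : 0 ≤ pripConst A s :=
  Real.sInf_nonneg fun _ hγ => hγ.1

theorem one_sub_pripConst_mul_le {x : Fin N → ℝ} (hx : sparse s x) :
    (1 - pripConst A s) * norm2 x ^ 2 ≤ norm2 (precond A *ᵥ x) ^ 2 := by
  obtain rfl | hx0 := eq_or_ne x 0
  · simp [norm2]
  have hpos : 0 < norm2 x ^ 2 := pow_pos (norm2_pos.mpr hx0) 2
  have : 1 - norm2 (precond A *ᵥ x) ^ 2 / norm2 x ^ 2 ≤ pripConst A s := by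
    refine le_csInf ⟨1, zero_le_one, fun _ _ => by simp only [sub_self, zero_mul]; positivity⟩
      fun γ hγ => ?_
    rw [sub_le_comm, le_div_iff₀ hpos]
    exact hγ.2 x hx
  rwa [sub_le_comm, le_div_iff₀ hpos] at this

end PripConst

theorem stmt2 {M N : ℕ} (A : Matrix (Fin M) (Fin N) ℝ) (hA : IsUnit (A * Aᴴ).det)
    (s t : ℕ) (u v : Fin N → ℝ) (T' T'' : Finset (Fin N))
    (hu : ∀ i, u i ≠ 0 ↔ i ∈ T') (hv : ∀ i, v i ≠ 0 ↔ i ∈ T'')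
    (hT' : T'.card ≤ s) (hT'' : T''.card ≤ t) (hdisj : Disjoint T' T'') :
    |A.mulVec u ⬝ᵥ (A * Aᴴ)⁻¹.mulVec (A.mulVec v)| ≤
      pripConst A (s + t) * norm2 u * norm2 v := by
  have huv : u ⬝ᵥ v = 0 :=
    dotProduct_eq_zero_of_disjoint (fun i => (hu i).mp) (fun i => (hv i).mp) hdisj
  rw [mulVec_dotProduct_inv_mulVec_eq]
  calc _ ≤ pripConst A (s + t) / 2 * norm2 u * norm2 v :=
        abs_mulVec_dotProduct_mulVec_le_of_sparse (precond_mul_transpose_precond A hA)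
          (fun _ => one_sub_pripConst_mul_le A (s + t)) (sparse_of_ne_zero_iff_mem hu hT')
          (sparse_of_ne_zero_iff_mem hv hT'') huv
    _ ≤ pripConst A (s + t) * norm2 u * norm2 v :=
        mul_le_mul_of_nonneg_right
          (mul_le_mul_of_nonneg_right (half_le_self (pripConst_nonneg A _)) (norm2_nonneg u))
          (norm2_nonneg v)
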